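/- arXiv:1507.07864 — 4 statements merged into one kernel-verified Lean document; each statement's English description precedes it below -/
import Mathlib

section
/- Let f : ℝ → ℝ be continuous and Q ⊆ ℝ compact. For fixed 0 < 𝔘 < β, the union of all safe sets contained in Q is the unique maximal safe set, and it is compact. -/
/-- The closed `u`-thickening of a set `X ⊆ ℝ`. -/
def thick (X : Set ℝ) (u : ℝ) : Set ℝ := {y : ℝ | ∃ x ∈ X, |y - x| ≤ u}

/-- `S` is a safe set in `Q` for control bound `𝔘` and disturbance bound `β`. -/
def SafeSet (f : ℝ → ℝ) (Q : Set ℝ) (𝔘 β : ℝ) (S : Set ℝ) : Prop :=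
  S ⊆ Q ∧ thick (f '' S) β ⊆ thick S 𝔘

/-!
A union of safe sets is safe, so the union `M` of all safe sets in `Q` is the largest one.
Thickening commutes with closure up to inclusion and, by continuity of `f`,
`f '' closure S ⊆ closure (f '' S)`; hence the closure of a safe set inside the compact set `Q`
is again safe. Maximality then gives `closure M ⊆ M`, so `M` is a closed subset of `Q`.
-/

open Set
open scoped Pointwise

lemma thick_mono {X Y : Set ℝ} (h : X ⊆ Y) (u : ℝ) : thick X u ⊆ thick Y u := by
  rintro y ⟨x, hx, hxy⟩
  exact ⟨x, h hx, hxy⟩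

lemma thick_eq_add_closedBall (X : Set ℝ) (u : ℝ) : thick X u = X + Metric.closedBall 0 u := by
  ext y
  simp only [thick, mem_ofPred_eq, mem_add, Metric.mem_closedBall, Real.dist_eq, sub_zero]
  constructor
  · rintro ⟨x, hx, hxy⟩
    exact ⟨x, hx, y - x, hxy, by ring⟩
  · rintro ⟨x, hx, d, hd, rfl⟩
    exact ⟨x, hx, by simpa using hd⟩

lemma isCompact_thick {X : Set ℝ} (hX : IsCompact X) (u : ℝ) : IsCompact (thick X u) := by
  rw [thick_eq_add_closedBall]
  exact hX.add (isCompact_closedBall 0 u)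

lemma thick_closure_subset_closure_thick (X : Set ℝ) (u : ℝ) :
    thick (closure X) u ⊆ closure (thick X u) := by
  rintro y ⟨x, hx, hxy⟩
  have hshift : ∀ z ∈ X, z + (y - x) ∈ thick X u := fun z hz => ⟨z, hz, by simpa using hxy⟩
  simpa using map_mem_closure (continuous_add_const (y - x)) hx hshift

section SafeSet

variable {f : ℝ → ℝ} {Q : Set ℝ} {𝔘 β : ℝ}

lemma SafeSet.sUnion {𝒮 : Set (Set ℝ)} (h : ∀ S ∈ 𝒮, SafeSet f Q 𝔘 β S) :
    SafeSet f Q 𝔘 β (⋃₀ 𝒮) := by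
  refine ⟨sUnion_subset fun S hS => (h S hS).1, ?_⟩
  rintro y ⟨_, ⟨x, ⟨S, hS, hxS⟩, rfl⟩, hy⟩
  obtain ⟨s, hs, hys⟩ := (h S hS).2 ⟨f x, mem_image_of_mem f hxS, hy⟩
  exact ⟨s, ⟨S, hS, hs⟩, hys⟩

lemma safeSet_closure {S : Set ℝ} (hS : SafeSet f Q 𝔘 β S) (hf : Continuous f)
    (hQ : IsCompact Q) : SafeSet f Q 𝔘 β (closure S) := by
  have hSQ : closure S ⊆ Q := closure_minimal hS.1 hQ.isClosed
  have hthick_closed : IsClosed (thick (closure S) 𝔘) :=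
    (isCompact_thick (hQ.of_isClosed_subset isClosed_closure hSQ) 𝔘).isClosed
  refine ⟨hSQ, ?_⟩
  calc thick (f '' closure S) β
      ⊆ thick (closure (f '' S)) β := thick_mono (image_closure_subset_closure_image hf) β
    _ ⊆ closure (thick (f '' S) β) := thick_closure_subset_closure_thick _ β
    _ ⊆ closure (thick S 𝔘) := closure_mono hS.2
    _ ⊆ thick (closure S) 𝔘 := closure_minimal (thick_mono subset_closure 𝔘) hthick_closed

end SafeSet

theorem maximal_safe_set_general (f : ℝ → ℝ) (Q : Set ℝ) (𝔘 β : ℝ)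
    (hf : Continuous f) (hQ : IsCompact Q) :
    SafeSet f Q 𝔘 β (⋃₀ {S | SafeSet f Q 𝔘 β S}) ∧
    (∀ S, SafeSet f Q 𝔘 β S → S ⊆ ⋃₀ {S | SafeSet f Q 𝔘 β S}) ∧
    IsCompact (⋃₀ {S | SafeSet f Q 𝔘 β S}) := by
  set M := ⋃₀ {S | SafeSet f Q 𝔘 β S}
  have hM : SafeSet f Q 𝔘 β M := SafeSet.sUnion fun _ hS => hS
  have hM_closed : IsClosed M :=
    closure_subset_iff_isClosed.mp (subset_sUnion_of_mem (safeSet_closure hM hf hQ))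
  exact ⟨hM, fun _ hS => subset_sUnion_of_mem hS, hQ.of_isClosed_subset hM_closed hM.1⟩

theorem maximal_safe_set (f : ℝ → ℝ) (Q : Set ℝ) (𝔘 β : ℝ)
    (hf : Continuous f) (hQ : IsCompact Q) (h𝔘 : 0 < 𝔘) (h𝔘β : 𝔘 < β) :
    SafeSet f Q 𝔘 β (⋃₀ {S | SafeSet f Q 𝔘 β S}) ∧
    (∀ S, SafeSet f Q 𝔘 β S → S ⊆ ⋃₀ {S | SafeSet f Q 𝔘 β S}) ∧
    IsCompact (⋃₀ {S | SafeSet f Q 𝔘 β S}) :=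
  maximal_safe_set_general f Q 𝔘 β hf hQ
end

section
/- Upper semicontinuity of maximal safe sets in the control bound: let f : ℝ → ℝ be continuous, Q ⊆ ℝ compact, and fix β > 0. For 0 < 𝔘 < β, the maximal safe set satisfies S_{𝔘,β} = ⋂_{δ>0} S_{𝔘+δ,β}, where the intersection is over all δ > 0 with 𝔘 + δ < β. In particular, the intersection ⋂_{δ>0} S_{𝔘+δ,β} is itself a safe set for parameters (𝔘, β). -/
/-- The maximal safe set: the union of all safe sets in `Q`. -/
def maxSafe (f : ℝ → ℝ) (Q : Set ℝ) (𝔘 β : ℝ) : Set ℝ :=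
  ⋃₀ {S | SafeSet f Q 𝔘 β S}

lemma thick_mono_u {X : Set ℝ} {u v : ℝ} (h : u ≤ v) : thick X u ⊆ thick X v := by
  rintro y ⟨x, hx, hxy⟩
  exact ⟨x, hx, hxy.trans h⟩

lemma safe_mono {f : ℝ → ℝ} {Q : Set ℝ} {u v β : ℝ} (h : u ≤ v) {S : Set ℝ}
    (hS : SafeSet f Q u β S) : SafeSet f Q v β S :=
  ⟨hS.1, hS.2.trans (thick_mono_u h)⟩

lemma maxSafe_safe (f : ℝ → ℝ) (Q : Set ℝ) (u β : ℝ) :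
    SafeSet f Q u β (maxSafe f Q u β) := by
  constructor
  · rintro x ⟨S, hS, hx⟩
    exact hS.1 hx
  · rintro y ⟨fy, ⟨x, ⟨S, hS, hxS⟩, rfl⟩, hyb⟩
    obtain ⟨z, hz, hzy⟩ := hS.2 ⟨f x, ⟨x, hxS, rfl⟩, hyb⟩
    exact ⟨z, ⟨S, hS, hz⟩, hzy⟩

lemma maxSafe_mono {f : ℝ → ℝ} {Q : Set ℝ} {u v β : ℝ} (h : u ≤ v) :
    maxSafe f Q u β ⊆ maxSafe f Q v β := by
  rintro x ⟨S, hS, hx⟩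
  exact ⟨S, safe_mono h hS, hx⟩

lemma safe_closure {f : ℝ → ℝ} {Q : Set ℝ} (hf : Continuous f) (hQ : IsCompact Q)
    {u β : ℝ} {S : Set ℝ} (hS : SafeSet f Q u β S) : SafeSet f Q u β (closure S) := by
  have hclQ : closure S ⊆ Q := closure_minimal hS.1 hQ.isClosed
  have hclcomp : IsCompact (closure S) := hQ.of_isClosed_subset isClosed_closure hclQ
  refine ⟨hclQ, ?_⟩
  rintro y ⟨fy, ⟨x, hx, rfl⟩, hyb⟩
  obtain ⟨xs, hxs, hxlim⟩ := mem_closure_iff_seq_limit.mp hx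
  -- for each n, the point y + (f (xs n) - f x) is in thick (f '' S) β
  have key : ∀ n, ∃ z ∈ S, |y + (f (xs n) - f x) - z| ≤ u := by
    intro n
    have : y + (f (xs n) - f x) ∈ thick (f '' S) β := by
      refine ⟨f (xs n), ⟨xs n, hxs n, rfl⟩, ?_⟩
      have : y + (f (xs n) - f x) - f (xs n) = y - f x := by ring
      rw [this]; exact hyb
    exact hS.2 this
  choose z hzS hzle using key
  have hzcl : ∀ n, z n ∈ closure S := fun n => subset_closure (hzS n)
  obtain ⟨z₀, hz₀, φ, hφ, hzlim⟩ := hclcomp.tendsto_subseq hzcl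
  refine ⟨z₀, hz₀, ?_⟩
  have hflim : Filter.Tendsto (fun n => f (xs n)) Filter.atTop (nhds (f x)) :=
    (hf.continuousAt.tendsto).comp hxlim
  have hylim : Filter.Tendsto (fun n => y + (f (xs (φ n)) - f x)) Filter.atTop (nhds y) := by
    have : Filter.Tendsto (fun n => y + (f (xs n) - f x)) Filter.atTop (nhds (y + (f x - f x))) :=
      tendsto_const_nhds.add (hflim.sub tendsto_const_nhds)
    simpa [Function.comp_def] using this.comp hφ.tendsto_atTop
  have hdlim : Filter.Tendsto (fun n => |y + (f (xs (φ n)) - f x) - z (φ n)|)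
      Filter.atTop (nhds (|y - z₀|)) := by
    have := (hylim.sub hzlim).abs
    simpa using this
  exact le_of_tendsto hdlim (Filter.Eventually.of_forall fun n => hzle (φ n))

lemma maxSafe_isClosed {f : ℝ → ℝ} {Q : Set ℝ} (hf : Continuous f) (hQ : IsCompact Q)
    (u β : ℝ) : IsClosed (maxSafe f Q u β) := by
  have h := safe_closure hf hQ (maxSafe_safe f Q u β)
  have hsub : closure (maxSafe f Q u β) ⊆ maxSafe f Q u β := fun x hx => ⟨_, h, hx⟩
  exact isClosed_of_closure_subset hsub

lemma maxSafe_isCompact {f : ℝ → ℝ} {Q : Set ℝ} (hf : Continuous f) (hQ : IsCompact Q)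
    (u β : ℝ) : IsCompact (maxSafe f Q u β) :=
  hQ.of_isClosed_subset (maxSafe_isClosed hf hQ u β) (maxSafe_safe f Q u β).1

theorem upper_semicontinuity_of_maximal_safe_set
    (f : ℝ → ℝ) (Q : Set ℝ) (𝔘 β : ℝ)
    (hf : Continuous f) (hQ : IsCompact Q) (h𝔘 : 0 < 𝔘) (h𝔘β : 𝔘 < β) :
    (maxSafe f Q 𝔘 β = ⋂ δ ∈ {δ : ℝ | 0 < δ ∧ 𝔘 + δ < β}, maxSafe f Q (𝔘 + δ) β) ∧
    SafeSet f Q 𝔘 β (⋂ δ ∈ {δ : ℝ | 0 < δ ∧ 𝔘 + δ < β}, maxSafe f Q (𝔘 + δ) β) := by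
  set D : Set ℝ := {δ : ℝ | 0 < δ ∧ 𝔘 + δ < β} with hD
  set T : Set ℝ := ⋂ δ ∈ D, maxSafe f Q (𝔘 + δ) β with hT
  have hδ₀ : (β - 𝔘) / 2 ∈ D := by
    constructor <;> [linarith; linarith]
  -- T is a safe set
  have hTsafe : SafeSet f Q 𝔘 β T := by
    constructor
    · intro x hx
      have hx₀ : x ∈ maxSafe f Q (𝔘 + (β - 𝔘) / 2) β := by
        exact Set.mem_iInter₂.mp hx _ hδ₀
      exact (maxSafe_safe f Q _ β).1 hx₀
    · rintro y ⟨fy, ⟨x, hxT, rfl⟩, hyb⟩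
      -- directed family of compact sets
      let K : D → Set ℝ := fun δ =>
        maxSafe f Q (𝔘 + δ.1) β ∩ Metric.closedBall y (𝔘 + δ.1)
      haveI : Nonempty D := ⟨⟨_, hδ₀⟩⟩
      have hdir : Directed (· ⊇ ·) K := by
        rintro ⟨δ₁, h₁⟩ ⟨δ₂, h₂⟩
        refine ⟨⟨min δ₁ δ₂, ⟨lt_min h₁.1 h₂.1, lt_of_le_of_lt (by simp [min_le_left]) h₁.2⟩⟩, ?_, ?_⟩
        · exact Set.inter_subset_inter (maxSafe_mono (by simp [min_le_left]))
            (Metric.closedBall_subset_closedBall (by simp [min_le_left]))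
        · exact Set.inter_subset_inter (maxSafe_mono (by simp [min_le_right]))
            (Metric.closedBall_subset_closedBall (by simp [min_le_right]))
      have hne : ∀ δ : D, (K δ).Nonempty := by
        rintro ⟨δ, hδ⟩
        have hxδ : x ∈ maxSafe f Q (𝔘 + δ) β := Set.mem_iInter₂.mp hxT δ hδ
        obtain ⟨z, hz, hzy⟩ := (maxSafe_safe f Q (𝔘 + δ) β).2 ⟨f x, ⟨x, hxδ, rfl⟩, hyb⟩
        refine ⟨z, hz, ?_⟩
        rw [Metric.mem_closedBall, Real.dist_eq, abs_sub_comm]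
        exact hzy
      have hcomp : ∀ δ : D, IsCompact (K δ) := fun δ =>
        (maxSafe_isCompact hf hQ _ β).inter_right Metric.isClosed_closedBall
      have hcl : ∀ δ : D, IsClosed (K δ) := fun δ =>
        ((maxSafe_isClosed hf hQ _ β).inter Metric.isClosed_closedBall)
      obtain ⟨z, hz⟩ := IsCompact.nonempty_iInter_of_directed_nonempty_isCompact_isClosed
        K hdir hne hcomp hcl
      have hzT : z ∈ T := by
        apply Set.mem_iInter₂.mpr
        intro δ hδ
        exact (Set.mem_iInter.mp hz ⟨δ, hδ⟩).1
      refine ⟨z, hzT, ?_⟩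
      refine le_of_forall_pos_le_add ?_
      intro ε hε
      set δ : ℝ := min ε ((β - 𝔘) / 2) with hδdef
      have hδD : δ ∈ D := ⟨lt_min hε hδ₀.1, by have h1 := min_le_right ε ((β - 𝔘) / 2); have h2 := hδ₀.2; linarith⟩
      have := (Set.mem_iInter.mp hz ⟨δ, hδD⟩).2
      rw [Metric.mem_closedBall, Real.dist_eq, abs_sub_comm] at this
      have hδε : δ ≤ ε := min_le_left _ _
      linarith
  refine ⟨?_, hTsafe⟩
  apply Set.Subset.antisymm
  · intro x hx
    apply Set.mem_iInter₂.mpr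
    intro δ hδ
    exact maxSafe_mono (by linarith [hδ.1]) hx
  · intro x hx
    exact ⟨T, hTsafe, hx⟩
end

section
/- Let D = diag(d₁,…,dₙ) be a real diagonal matrix and M an n×n matrix with entries in {0,1} with at most one 1 per row. If every dᵢ satisfies |dᵢ| > 1, then det(D − M) ≠ 0. -/
/-!
The rows of a 0/1 matrix with at most one 1 per row have ℓ¹-norm at most `1 < |dᵢ|`, so
`D - M` is strictly diagonally dominant and Gershgorin's theorem makes it nonsingular.
-/

open Finset

theorem Matrix.det_diagonal_sub_ne_zero_of_sum_norm_le_one {K ι : Type*} [NormedField K]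
    [Fintype ι] [DecidableEq ι] (d : ι → K) (M : Matrix ι ι K)
    (hM : ∀ i, ∑ j, ‖M i j‖ ≤ 1) (hd : ∀ i, 1 < ‖d i‖) :
    (Matrix.diagonal d - M).det ≠ 0 := by
  refine det_ne_zero_of_sum_row_lt_diag fun k => ?_
  calc ∑ j ∈ univ.erase k, ‖(Matrix.diagonal d - M) k j‖
      = ∑ j ∈ univ.erase k, ‖M k j‖ := sum_congr rfl fun j hj => by
        rw [Matrix.sub_apply, Matrix.diagonal_apply_ne _ (ne_of_mem_erase hj).symm, zero_sub,
          norm_neg]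
    _ = ∑ j, ‖M k j‖ - ‖M k k‖ := sum_erase_eq_sub (mem_univ k)
    _ < ‖d k‖ - ‖M k k‖ := by linarith [hM k, hd k]
    _ ≤ ‖d k - M k k‖ := norm_sub_norm_le _ _
    _ = ‖(Matrix.diagonal d - M) k k‖ := by rw [Matrix.sub_apply, Matrix.diagonal_apply_eq]

theorem sum_norm_le_one_of_zero_one {R ι : Type*} [NormedRing R] [NormOneClass R]
    [DecidableEq R] [Fintype ι] {v : ι → R} (h01 : ∀ j, v j = 0 ∨ v j = 1)
    (hone : #(univ.filter fun j => v j = 1) ≤ 1) :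
    ∑ j, ‖v j‖ ≤ 1 := by
  have : Nontrivial R := NormOneClass.nontrivial
  calc ∑ j, ‖v j‖
      = ∑ j, if v j = 1 then (1 : ℝ) else 0 :=
        sum_congr rfl fun j _ => by rcases h01 j with h | h <;> simp [h]
    _ = #(univ.filter fun j => v j = 1) := sum_boole _ _
    _ ≤ 1 := by exact_mod_cast hone

theorem det_diagonal_sub_zero_one_matrix_ne_zero {n : ℕ} (d : Fin n → ℝ)
    (M : Matrix (Fin n) (Fin n) ℝ)
    (hM01 : ∀ i j, M i j = 0 ∨ M i j = 1)
    (hMrow : ∀ i, (Finset.univ.filter (fun j => M i j = 1)).card ≤ 1)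
    (hd : ∀ i, 1 < |d i|) :
    (Matrix.diagonal d - M).det ≠ 0 :=
  Matrix.det_diagonal_sub_ne_zero_of_sum_norm_le_one d M
    (fun i => sum_norm_le_one_of_zero_one (hM01 i) (hMrow i)) hd
end

section
/- If the maximal safe set S for parameters (𝔘, β) satisfies f(S) + β = S + 𝔘 (the 'tight' case, which holds at 𝔘 = u_min(β) when it is not a split bifurcation), then for every δ > 0, S is also a safe set for parameters (𝔘 + δ, β + δ). Consequently u_min(β₀ + δ) ≤ u_min(β₀) + δ. -/
/-- The minimum control bound for which a nonempty safe set exists. -/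
noncomputable def uMin (f : ℝ → ℝ) (Q : Set ℝ) (β : ℝ) : ℝ :=
  sInf {u : ℝ | 0 < u ∧ ∃ S : Set ℝ, S.Nonempty ∧ SafeSet f Q u β S}

section Thickening

variable {X : Set ℝ} {a b : ℝ}

theorem thick_thick_subset : thick (thick X a) b ⊆ thick X (a + b) := by
  rintro y ⟨z, ⟨x, hx, hzx⟩, hyz⟩
  refine ⟨x, hx, ?_⟩
  calc |y - x| = |(y - z) + (z - x)| := by ring_nf
    _ ≤ |y - z| + |z - x| := abs_add_le _ _
    _ ≤ a + b := by linarith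

theorem thick_add_subset (ha : 0 ≤ a) (hb : 0 ≤ b) : thick X (a + b) ⊆ thick (thick X a) b := by
  rintro y ⟨x, hx, hyx⟩
  rw [abs_le] at hyx
  -- `z` is the nearest point to `y` in `[x - a, x + a]`
  set z := x + max (-a) (min a (y - x))
  refine ⟨z, ⟨x, hx, ?_⟩, ?_⟩ <;> rw [abs_le] <;> constructor <;>
    simp only [z, max_def, min_def] <;> split_ifs <;> linarith

theorem thick_thick (ha : 0 ≤ a) (hb : 0 ≤ b) : thick (thick X a) b = thick X (a + b) :=
  thick_thick_subset.antisymm (thick_add_subset ha hb)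

end Thickening

theorem maxSafe_subset (f : ℝ → ℝ) (Q : Set ℝ) (𝔘 β : ℝ) : maxSafe f Q 𝔘 β ⊆ Q :=
  Set.sUnion_subset fun _ hT => hT.1

theorem SafeSet.of_thick_eq {f : ℝ → ℝ} {Q S : Set ℝ} {𝔘 β δ : ℝ} (h𝔘 : 0 ≤ 𝔘) (hβ : 0 ≤ β)
    (hδ : 0 ≤ δ) (hSQ : S ⊆ Q) (htight : thick (f '' S) β = thick S 𝔘) :
    SafeSet f Q (𝔘 + δ) (β + δ) S := by
  refine ⟨hSQ, ?_⟩
  rw [← thick_thick hβ hδ, htight, thick_thick h𝔘 hδ]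

theorem uMin_le {f : ℝ → ℝ} {Q S : Set ℝ} {u β : ℝ} (hu : 0 < u) (hS : S.Nonempty)
    (hsafe : SafeSet f Q u β S) : uMin f Q β ≤ u :=
  csInf_le ⟨0, fun _ hv => hv.1.le⟩ ⟨hu, S, hS, hsafe⟩

theorem tight_safe_set_gives_uMin_slope_one_general (f : ℝ → ℝ) (Q : Set ℝ) (𝔘 β : ℝ)
    (h𝔘 : 0 < 𝔘) (h𝔘β : 𝔘 < β)
    (S : Set ℝ) (hS : S = maxSafe f Q 𝔘 β) (hSne : S.Nonempty)
    (htight : thick (f '' S) β = thick S 𝔘) (h𝔘min : 𝔘 = uMin f Q β) :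
    (∀ δ > (0:ℝ), SafeSet f Q (𝔘 + δ) (β + δ) S) ∧
    (∀ δ > (0:ℝ), uMin f Q (β + δ) ≤ uMin f Q β + δ) := by
  have hSQ : S ⊆ Q := hS ▸ maxSafe_subset f Q 𝔘 β
  have hsafe : ∀ δ > (0:ℝ), SafeSet f Q (𝔘 + δ) (β + δ) S := fun δ hδ =>
    .of_thick_eq h𝔘.le (h𝔘.trans h𝔘β).le hδ.le hSQ htight
  refine ⟨hsafe, fun δ hδ => ?_⟩
  rw [← h𝔘min]
  exact uMin_le (add_pos h𝔘 hδ) hSne (hsafe δ hδ)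

theorem tight_safe_set_gives_uMin_slope_one (f : ℝ → ℝ) (Q : Set ℝ) (𝔘 β : ℝ)
    (hf : Continuous f) (hQ : IsCompact Q) (h𝔘 : 0 < 𝔘) (h𝔘β : 𝔘 < β)
    (S : Set ℝ) (hS : S = maxSafe f Q 𝔘 β) (hSne : S.Nonempty)
    (htight : thick (f '' S) β = thick S 𝔘) (h𝔘min : 𝔘 = uMin f Q β) :
    (∀ δ > (0:ℝ), SafeSet f Q (𝔘 + δ) (β + δ) S) ∧
    (∀ δ > (0:ℝ), uMin f Q (β + δ) ≤ uMin f Q β + δ) :=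
  tight_safe_set_gives_uMin_slope_one_general f Q 𝔘 β h𝔘 h𝔘β S hS hSne htight h𝔘min
end
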